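/- If a sequence of positive integers ℓ₁, …, ℓₙ satisfies ∑ᵢ 2^(−ℓᵢ) ≤ 1/2, then there exists a binary alphabetic code with codeword lengths ℓ₁, …, ℓₙ (i.e., a binary prefix code whose codewords, in the given order, are strictly increasing in the lexicographic order on binary strings). -/

import Mathlib

/-- No codeword is a prefix of another. -/
def PrefixFree {n : ℕ} (w : Fin n → List Bool) : Prop :=
  ∀ i j : Fin n, i ≠ j → ¬ (w i <+: w j)

/-- The codewords are strictly increasing in the lexicographic order on binary strings. -/
def LexIncreasing {n : ℕ} (w : Fin n → List Bool) : Prop :=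
  ∀ i j : Fin n, i < j → List.Lex (· < ·) (w i) (w j)

/-- A binary alphabetic code: prefix-free and lexicographically increasing codewords. -/
def IsAlphabeticCode {n : ℕ} (w : Fin n → List Bool) : Prop :=
  PrefixFree w ∧ LexIncreasing w

/-- MSB-first binary representation of `m` with `k` bits. -/
def AlphCode.bits : ℕ → ℕ → List Bool
  | 0, _ => []
  | k+1, m => (decide (2^k ≤ m)) :: AlphCode.bits k (m % 2^k)

/-- MSB-first value of a bit string. -/
def AlphCode.val : List Bool → ℕ
  | [] => 0
  | b :: t => (if b then 2^t.length else 0) + AlphCode.val t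

namespace AlphCode

lemma bits_length : ∀ k m, (bits k m).length = k := by
  intro k
  induction k with
  | zero => intro m; rfl
  | succ k ih => intro m; simp [bits, ih]

lemma val_lt : ∀ u : List Bool, val u < 2 ^ u.length := by
  intro u
  induction u with
  | nil => simp [val]
  | cons b t ih =>
    have : (2:ℕ)^(b :: t).length = 2^t.length * 2 := by rw [List.length_cons, pow_succ]
    rw [this]
    simp only [val]
    split_ifs <;> omega

lemma val_bits : ∀ k m, m < 2^k → val (bits k m) = m := by
  intro k
  induction k with
  | zero => intro m h; interval_cases m; rfl
  | succ k ih =>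
    intro m h
    have h2 : (2:ℕ)^(k+1) = 2^k * 2 := pow_succ 2 k
    have hpow : (0:ℕ) < 2^k := Nat.pow_pos (by norm_num)
    simp only [bits, val, bits_length]
    by_cases hm : 2^k ≤ m
    · have hmod : m % 2^k = m - 2^k := by
        rw [Nat.mod_eq_sub_mod hm, Nat.mod_eq_of_lt (by omega)]
      rw [hmod, ih _ (by omega)]
      simp only [hm, decide_eq_true_eq, if_pos, decide_true]
      omega
    · have hmod : m % 2^k = m := Nat.mod_eq_of_lt (by omega)
      rw [hmod, ih _ (by omega)]
      simp [hm]

lemma cancel_aux {c₁ c₂ x y X Y A : ℕ} (e1 : c₁ * X = A) (e2 : c₂ * Y = A)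
    (h : (c₁ + x + 1) * X ≤ (c₂ + y) * Y) : (x + 1) * X ≤ y * Y := by
  have h' : A + (x + 1) * X ≤ A + y * Y := by
    calc A + (x + 1) * X = (c₁ + x + 1) * X := by rw [← e1]; ring
    _ ≤ (c₂ + y) * Y := h
    _ = A + y * Y := by rw [← e2]; ring
  exact Nat.le_of_add_le_add_left h'

lemma key : ∀ (u v : List Bool) (L : ℕ), u.length ≤ L → v.length ≤ L →
    (val u + 1) * 2 ^ (L - u.length) ≤ val v * 2 ^ (L - v.length) →
    List.Lex (· < ·) u v ∧ ¬ u <+: v ∧ ¬ v <+: u := by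
  intro u
  induction u with
  | nil =>
    intro v L _ hv h
    exfalso
    have h1 : val v * 2 ^ (L - v.length) < 2 ^ L := by
      calc val v * 2 ^ (L - v.length) < 2 ^ v.length * 2 ^ (L - v.length) :=
            Nat.mul_lt_mul_of_lt_of_le (val_lt v) le_rfl (Nat.pow_pos (by norm_num))
        _ = 2 ^ L := by rw [← pow_add]; congr 1; omega
    simp only [val, List.length_nil, Nat.sub_zero, zero_add, one_mul] at h
    omega
  | cons a u ih =>
    intro v L hu hv h
    match v with
    | [] =>
      exfalso
      simp only [val, List.length_nil, Nat.sub_zero, zero_mul, Nat.le_zero] at h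
      have : 0 < ((if a then 2 ^ u.length else 0) + val u + 1) * 2 ^ (L - (a :: u).length) :=
        Nat.mul_pos (by omega) (Nat.pow_pos (by norm_num))
      omega
    | b :: v =>
      have hu' : u.length ≤ L - 1 := by simp at hu; omega
      have hv' : v.length ≤ L - 1 := by simp at hv; omega
      have eu : L - (a :: u).length = L - 1 - u.length := by simp; omega
      have ev : L - (b :: v).length = L - 1 - v.length := by simp; omega
      have e1 : 2 ^ u.length * 2 ^ (L - 1 - u.length) = 2 ^ (L - 1) := by
        rw [← pow_add]; congr 1; omega
      have e2 : 2 ^ v.length * 2 ^ (L - 1 - v.length) = 2 ^ (L - 1) := by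
        rw [← pow_add]; congr 1; omega
      rw [eu, ev] at h
      simp only [val] at h
      cases a <;> cases b
      · -- false false
        simp only [Bool.false_eq_true, if_false] at h
        obtain ⟨l, p1, p2⟩ := ih v (L - 1) hu' hv' (by simpa using h)
        exact ⟨List.Lex.cons l, by simp [List.cons_prefix_cons, p1],
          by simp [List.cons_prefix_cons, p2]⟩
      · -- false true : heads differ, false < true
        refine ⟨List.Lex.rel (by decide), ?_, ?_⟩ <;> simp [List.cons_prefix_cons]
      · -- true false : contradiction
        exfalso
        simp only [Bool.false_eq_true, if_false, if_pos rfl] at h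
        have r1 : 2 ^ (L - 1) ≤ (2 ^ u.length + val u + 1) * 2 ^ (L - 1 - u.length) := by
          rw [← e1]
          exact Nat.mul_le_mul_right _ (by omega)
        have r2 : val v * 2 ^ (L - 1 - v.length) < 2 ^ (L - 1) := by
          rw [← e2]
          exact Nat.mul_lt_mul_of_lt_of_le (val_lt v) le_rfl (Nat.pow_pos (by norm_num))
        have := (r1.trans (by simpa using h)).trans_lt r2
        omega
      · -- true true
        simp only [if_pos rfl] at h
        have h' : (val u + 1) * 2 ^ (L - 1 - u.length) ≤ val v * 2 ^ (L - 1 - v.length) :=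
          cancel_aux e1 e2 (by simpa using h)
        obtain ⟨l, p1, p2⟩ := ih v (L - 1) hu' hv' h'
        exact ⟨List.Lex.cons l, by simp [List.cons_prefix_cons, p1],
          by simp [List.cons_prefix_cons, p2]⟩

end AlphCode

/-- Cumulative rounded-up positions. -/
def AlphCode.chain (t : ℕ → ℕ) : ℕ → ℕ
  | 0 => 0
  | i+1 => (AlphCode.chain t i + t i + t (i+1) - 1) / t (i+1) * t (i+1)

namespace AlphCode

lemma le_roundUp (x d : ℕ) (hd : 0 < d) : x ≤ (x + d - 1) / d * d := by
  have h1 : d * ((x + d - 1) / d) + (x + d - 1) % d = x + d - 1 := Nat.div_add_mod _ _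
  have h2 : (x + d - 1) % d < d := Nat.mod_lt _ hd
  rw [mul_comm] at h1
  generalize hm : (x + d - 1) / d * d = m at h1 ⊢
  generalize hr : (x + d - 1) % d = r at h1 h2
  omega

lemma chain_dvd (t : ℕ → ℕ) : ∀ i, t i ∣ chain t i
  | 0 => dvd_zero _
  | _+1 => dvd_mul_left _ _

lemma chain_step (t : ℕ → ℕ) (ht : ∀ i, 0 < t i) (i : ℕ) :
    chain t i + t i ≤ chain t (i+1) :=
  le_roundUp _ _ (ht (i+1))

lemma chain_le (t : ℕ → ℕ) (i : ℕ) :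
    chain t (i+1) ≤ chain t i + t i + t (i+1) := by
  calc chain t (i+1) ≤ chain t i + t i + t (i+1) - 1 := Nat.div_mul_le_self _ _
    _ ≤ _ := Nat.sub_le _ _

lemma chain_mono (t : ℕ → ℕ) (ht : ∀ i, 0 < t i) (i : ℕ) :
    ∀ j, i < j → chain t i + t i ≤ chain t j := by
  intro j
  induction j with
  | zero => omega
  | succ j IH =>
    intro hij
    rcases Nat.lt_or_ge i j with h | h
    · exact (IH h).trans ((Nat.le_add_right _ (t j)).trans (chain_step t ht j))
    · have : i = j := by omega
      subst this
      exact chain_step t ht i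

lemma chain_bound (t : ℕ → ℕ) (i : ℕ) :
    chain t i + t i ≤ 2 * ∑ j ∈ Finset.range (i+1), t j := by
  induction i with
  | zero => simp [chain]; omega
  | succ i IH =>
    have h1 := chain_le t i
    rw [Finset.sum_range_succ]
    omega

end AlphCode

open AlphCode in
/-- If positive integer lengths satisfy ∑ 2^(−ℓᵢ) ≤ 1/2, then a binary alphabetic code
with those codeword lengths (in order) exists. -/
theorem alphabetic_of_kraft_half (n : ℕ) (ℓ : Fin n → ℕ) (hpos : ∀ i, 0 < ℓ i)
    (hkraft : ∑ i, (2 : ℝ) ^ (-(ℓ i : ℤ)) ≤ 1 / 2) :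
    ∃ w : Fin n → List Bool, IsAlphabeticCode w ∧ ∀ i, (w i).length = ℓ i := by
  classical
  set L : ℕ := Finset.univ.sup ℓ + 1 with hLdef
  have hL : 1 ≤ L := Nat.le_add_left _ _
  have hle : ∀ i : Fin n, ℓ i ≤ L :=
    fun i => le_trans (Finset.le_sup (Finset.mem_univ i)) (Nat.le_succ _)
  set ℓ' : ℕ → ℕ := fun k => if h : k < n then ℓ ⟨k, h⟩ else 1 with hℓ'def
  set t : ℕ → ℕ := fun k => 2 ^ (L - ℓ' k) with htdef'
  have ht : ∀ k, 0 < t k := fun k => Nat.pow_pos (by norm_num)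
  have hℓ'i : ∀ i : Fin n, ℓ' (i : ℕ) = ℓ i := by
    intro i
    simp [hℓ'def, i.isLt]
  have htdef : ∀ i : Fin n, t (i : ℕ) = 2 ^ (L - ℓ i) := by
    intro i
    simp [htdef', hℓ'i i]
  -- integer Kraft inequality
  have hK : ∑ j ∈ Finset.range n, t j ≤ 2 ^ (L - 1) := by
    have h2 : ((∑ j ∈ Finset.range n, t j : ℕ) : ℝ) ≤ ((2 ^ (L-1) : ℕ) : ℝ) := by
      push_cast
      rw [← Fin.sum_univ_eq_sum_range (fun k => ((t k : ℕ) : ℝ)) n]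
      have hterm : ∀ i : Fin n, ((t i : ℕ) : ℝ) = 2 ^ L * (2:ℝ) ^ (-(ℓ i : ℤ)) := by
        intro i
        rw [htdef i]
        push_cast
        rw [← zpow_natCast (2:ℝ) (L - ℓ i), ← zpow_natCast (2:ℝ) L, ← zpow_add₀ (two_ne_zero)]
        congr 1
        have := hle i
        omega
      calc ∑ i : Fin n, ((t i : ℕ) : ℝ) = ∑ i : Fin n, 2 ^ L * (2:ℝ) ^ (-(ℓ i : ℤ)) :=
            Finset.sum_congr rfl fun i _ => hterm i
        _ = 2 ^ L * ∑ i : Fin n, (2:ℝ) ^ (-(ℓ i : ℤ)) := (Finset.mul_sum _ _ _).symm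
        _ ≤ 2 ^ L * (1/2) := mul_le_mul_of_nonneg_left hkraft (by positivity)
        _ = 2 ^ (L - 1) := by
            have hLL : L = (L - 1) + 1 := by omega
            rw [hLL]
            push_cast [pow_succ]
            ring
    exact_mod_cast h2
  -- the codewords
  set F : ℕ → ℕ := chain t with hFdef
  set w : Fin n → List Bool := fun i => bits (ℓ i) (F i / t i) with hwdef
  have hlen : ∀ i, (w i).length = ℓ i := fun i => bits_length _ _
  -- global bound : F i + t i ≤ 2^L for i < n
  have hglobal : ∀ i : Fin n, F (i : ℕ) + t (i : ℕ) ≤ 2 ^ L := by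
    intro i
    calc F (i : ℕ) + t (i : ℕ) ≤ 2 * ∑ j ∈ Finset.range ((i : ℕ)+1), t j := chain_bound t _
      _ ≤ 2 * ∑ j ∈ Finset.range n, t j := by
          apply Nat.mul_le_mul_left
          exact Finset.sum_le_sum_of_subset (Finset.range_subset_range.mpr i.isLt)
      _ ≤ 2 * 2 ^ (L - 1) := Nat.mul_le_mul_left _ hK
      _ = 2 ^ L := by
          have hLL : L = (L - 1) + 1 := by omega
          conv_rhs => rw [hLL]
          rw [pow_succ]
          ring
  have hFi : ∀ i : Fin n, (F (i : ℕ) / t (i : ℕ)) * t (i : ℕ) = F (i : ℕ) :=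
    fun i => Nat.div_mul_cancel (chain_dvd t _)
  have hmlt : ∀ i : Fin n, F (i : ℕ) / t (i : ℕ) < 2 ^ ℓ i := by
    intro i
    have h1 : F (i : ℕ) < 2 ^ L := by have := hglobal i; have := ht (i : ℕ); omega
    have h2 : (2:ℕ) ^ ℓ i * t (i : ℕ) = 2 ^ L := by
      rw [htdef i, ← pow_add]
      congr 1
      have := hle i
      omega
    by_contra hcon
    push_neg at hcon
    have : 2 ^ L ≤ F (i : ℕ) := by
      calc 2 ^ L = 2 ^ ℓ i * t (i : ℕ) := h2.symm
        _ ≤ (F (i : ℕ) / t (i : ℕ)) * t (i : ℕ) := Nat.mul_le_mul_right _ hcon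
        _ = F (i : ℕ) := hFi i
    omega
  have hval : ∀ i : Fin n, val (w i) = F (i : ℕ) / t (i : ℕ) :=
    fun i => val_bits _ _ (hmlt i)
  -- the ordering hypothesis for key
  have hord : ∀ i j : Fin n, i < j →
      (val (w i) + 1) * 2 ^ (L - (w i).length) ≤ val (w j) * 2 ^ (L - (w j).length) := by
    intro i j hij
    rw [hval i, hval j, hlen i, hlen j, ← htdef i, ← htdef j]
    have e1 : (F (i:ℕ) / t (i:ℕ) + 1) * t (i:ℕ) = F (i:ℕ) + t (i:ℕ) := by
      rw [add_mul, hFi i, one_mul]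
    rw [e1, hFi j]
    exact chain_mono t ht _ _ (by exact_mod_cast hij)
  have hkey : ∀ i j : Fin n, i < j →
      List.Lex (· < ·) (w i) (w j) ∧ ¬ w i <+: w j ∧ ¬ w j <+: w i := by
    intro i j hij
    exact key (w i) (w j) L (by rw [hlen i]; exact hle i) (by rw [hlen j]; exact hle j)
      (hord i j hij)
  refine ⟨w, ⟨?_, ?_⟩, hlen⟩
  · intro i j hij
    rcases lt_or_gt_of_ne hij with h | h
    · exact (hkey i j h).2.1
    · exact (hkey j i h).2.2
  · intro i j hij
    exact (hkey i j hij).1
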